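/- For an integer ν ≥ 3, set d = ν(ν-1), c = ν(ν-1)(ν-2), n = ν(ν-1)(ν-2)(ν-3)/2, S(ν) = (ν+1)(ν+2)(ν+3)/6 - 1, and V(ν) = d(d+3)/2 - n - 2c (all rational numbers). Then S(ν) - 4 = V(ν) for ν = 3 and ν = 4, and S(ν) - 4 > V(ν) for every ν ≥ 5. -/
import Mathlib

/-- Comparison of the dimension S(ν) - 4 of the variety of branch curves of
smooth degree-ν surfaces in ℙ³ with the virtual dimension V(ν): equality for
ν = 3, 4 and strict excess for ν ≥ 5. -/
theorem dim_branch_vs_virtual (ν : ℤ) (hν : 3 ≤ ν) :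
    let d : ℚ := (ν : ℚ) * ((ν : ℚ) - 1)
    let c : ℚ := (ν : ℚ) * ((ν : ℚ) - 1) * ((ν : ℚ) - 2)
    let n : ℚ := (ν : ℚ) * ((ν : ℚ) - 1) * ((ν : ℚ) - 2) * ((ν : ℚ) - 3) / 2
    let S : ℚ := ((ν : ℚ) + 1) * ((ν : ℚ) + 2) * ((ν : ℚ) + 3) / 6 - 1
    let V : ℚ := d * (d + 3) / 2 - n - 2 * c
    ((ν = 3 ∨ ν = 4) → S - 4 = V) ∧ (5 ≤ ν → S - 4 > V) := by
  intro d c n S V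
  constructor
  · rintro (rfl | rfl) <;> norm_num [d, c, n, S, V]
  · intro h5
    have h : (5 : ℚ) ≤ (ν : ℚ) := by exact_mod_cast h5
    simp only [d, c, n, S, V]
    nlinarith [sq_nonneg ((ν : ℚ) - 5), sq_nonneg ((ν : ℚ) - 4), sq_nonneg ((ν : ℚ) - 3)]
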